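/- For every rational number d, d times the coefficient of z in the power series H(z)^4·H(d²z)^{-1} equals −d(d²−4)/3, where H(z) = C(z)/S(z) with C(z) = Σ z^k/(2k)! and S(z) = Σ z^k/(2k+1)!. -/

import Mathlib

open PowerSeries

noncomputable def Cser : PowerSeries ℚ := PowerSeries.mk fun k => 1 / (2 * k).factorial

noncomputable def Sser : PowerSeries ℚ := PowerSeries.mk fun k => 1 / (2 * k + 1).factorial

noncomputable def Hser : PowerSeries ℚ := Cser * Sser⁻¹

/-!
Only the first two coefficients matter: on series with constant term `1`, `coeff 1` turns
products into sums, inverses into negatives and `rescale a` into multiplication by `a`.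
Since `H = 1 + z/3 + O(z²)`, the coefficient of `z` in `H(z)⁴ H(d²z)⁻¹` is `(4 - d²)/3`.
-/

namespace PowerSeries

theorem constantCoeff_rescale {R : Type*} [CommSemiring R] (a : R) (φ : R⟦X⟧) :
    constantCoeff (rescale a φ) = constantCoeff φ := by
  rw [← coeff_zero_eq_constantCoeff_apply, coeff_rescale, pow_zero, one_mul,
    coeff_zero_eq_constantCoeff_apply]

/-- Also true when `constantCoeff φ = 0`, where both sides are junk zeros. -/
theorem coeff_one_inv {k : Type*} [Field k] (φ : k⟦X⟧) :
    coeff 1 φ⁻¹ = -coeff 1 φ / constantCoeff φ ^ 2 := by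
  by_cases h : constantCoeff φ = 0
  · simp [inv_eq_zero.mpr h, h]
  have h1 := congrArg (coeff 1) (PowerSeries.mul_inv_cancel φ h)
  rw [coeff_one_mul, coeff_one, if_neg one_ne_zero, constantCoeff_inv] at h1
  field_simp at h1 ⊢
  linear_combination h1

theorem coeff_one_pow_mul_inv_rescale {k : Type*} [Field k] {φ : k⟦X⟧}
    (hφ : constantCoeff φ = 1) (n : ℕ) (a : k) :
    coeff 1 (φ ^ n * (rescale a φ)⁻¹) = (n - a) * coeff 1 φ := by
  rw [coeff_one_mul, coeff_one_pow, coeff_one_inv, coeff_rescale, constantCoeff_inv,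
    constantCoeff_rescale, map_pow, hφ]
  ring

end PowerSeries

theorem constantCoeff_Cser : constantCoeff Cser = 1 := by
  simp [Cser]

theorem constantCoeff_Sser : constantCoeff Sser = 1 := by
  simp [Sser]

theorem constantCoeff_Hser : constantCoeff Hser = 1 := by
  rw [Hser, map_mul, constantCoeff_inv, constantCoeff_Cser, constantCoeff_Sser, inv_one, one_mul]

theorem coeff_one_Hser : coeff 1 Hser = 1 / 3 := by
  rw [Hser, coeff_one_mul, coeff_one_inv, constantCoeff_inv, constantCoeff_Cser,
    constantCoeff_Sser]
  norm_num [Cser, Sser, Nat.factorial]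

theorem signature_surface_in_P3 (d : ℚ) :
    d * coeff 1 (Hser ^ 4 * (PowerSeries.rescale (d ^ 2) Hser)⁻¹)
      = -(d * (d ^ 2 - 4)) / 3 := by
  rw [coeff_one_pow_mul_inv_rescale constantCoeff_Hser, coeff_one_Hser]
  ring
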